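/- arXiv:2005.09601 — 5 statements merged into one kernel-verified Lean document; each statement's English description precedes it below -/
import Mathlib

section
/- Let u and v be two c-bounded t-spread monomials of degree d in n variables, and write uv = x_{i_1} x_{i_2} ⋯ x_{i_{2d}} with i_1 ≤ i_2 ≤ ... ≤ i_{2d}. Then the sorted pair v' = x_{i_1} x_{i_3} ⋯ x_{i_{2d-1}} and u' = x_{i_2} x_{i_4} ⋯ x_{i_{2d}} are again c-bounded t-spread monomials of degree d. In other words, the set of generators of the c-bounded t-spread Veronese ideal I_{c,(n,d,t)} is a sortable set. -/
/-- A list (representing a weakly increasing multiset) is `t`-spread if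
successive entries differ by at least `t`. -/
def TSpread (t : ℕ) (A : List ℕ) : Prop :=
  A.Chain' (fun a b => a + t ≤ b)

/-- A block (for the parameter `t`) is a nonempty run whose successive
differences are exactly `t`. -/
def IsBlock (t : ℕ) (B : List ℕ) : Prop :=
  B ≠ [] ∧ B.Chain' (fun a b => b = a + t)

/-- `Bs` is the decomposition of `A` into maximal blocks. -/
def IsBlockDecomp (t : ℕ) (A : List ℕ) (Bs : List (List ℕ)) : Prop :=
  A = Bs.flatten ∧ (∀ B ∈ Bs, IsBlock t B) ∧
    Bs.Chain' (fun B C => ∀ x ∈ B.getLast?, ∀ y ∈ C.head?, x + t < y)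

/-- `A` is `c`-bounded: every block of its (unique) maximal block
decomposition has size at most `c`. -/
def CBounded (c t : ℕ) (A : List ℕ) : Prop :=
  ∀ Bs, IsBlockDecomp t A Bs → ∀ B ∈ Bs, B.length ≤ c

/-- The set of (sorted index lists of) minimal monomial generators of the
`c`-bounded `t`-spread Veronese ideal `I_{c,(n,d,t)}`. -/
def Gen (c n d t : ℕ) : Set (List ℕ) :=
  {A | A.length = d ∧ TSpread t A ∧ CBounded c t A ∧ ∀ i ∈ A, 1 ≤ i ∧ i ≤ n}


/-- The alternating extraction: `alt true` takes the entries at positions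
`1,3,5,…` (1-based), `alt false` those at positions `2,4,6,…`. -/
def alt : Bool → List ℕ → List ℕ
  | _, [] => []
  | true, a :: l => a :: alt false l
  | false, _ :: l => alt true l

/-! Let `w` be the sorted union of `u` and `v`. Consecutive entries `x, y` of `alt b w` enclose
three consecutive entries of `w`, all in `[x, y]`; more generally a run `x, x + t, …, x + c t` of
`alt b w` encloses `2 c + 1` consecutive entries of `w` in `[x, x + c t]`. But a `t`-spread list
has at most one entry in an interval of length `< t`, and a `c`-bounded `t`-spread list has at most
`c` entries in `[x, x + c t]` (`c + 1` of them would form a block). Adding the contributions of `u`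
and `v` to such intervals rules out both a gap `< t` and a block of length `c + 1` in `alt b w`. -/

open List

namespace List

variable {α : Type*} [Preorder α] {s : Set α} [DecidablePred (· ∈ s)]

theorem Pairwise.filter_prefix_of_ordConnected (hs : s.OrdConnected) {a : α} (ha : a ∈ s) :
    ∀ {l : List α}, l.Pairwise (· ≤ ·) → (∀ x ∈ l, a ≤ x) → l.filter (· ∈ s) <+: l
  | [], _, _ => nil_prefix
  | b :: l, hl, hal => by
    rw [pairwise_cons] at hl
    by_cases hb : b ∈ s
    · rw [filter_cons_of_pos (by simpa using hb), cons_prefix_cons]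
      exact ⟨rfl, hl.2.filter_prefix_of_ordConnected hs hb hl.1⟩
    · rw [filter_cons_of_neg (by simpa using hb), filter_eq_nil_iff.2 fun x hx hxs ↦
        hb (hs.out ha (by simpa using hxs) ⟨hal b mem_cons_self, hl.1 x hx⟩)]
      exact nil_prefix

theorem Pairwise.filter_infix_of_ordConnected (hs : s.OrdConnected) :
    ∀ {l : List α}, l.Pairwise (· ≤ ·) → l.filter (· ∈ s) <:+: l
  | [], _ => nil_infix
  | a :: l, hl => by
    rw [pairwise_cons] at hl
    by_cases ha : a ∈ s
    · rw [filter_cons_of_pos (by simpa using ha)]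
      exact (cons_prefix_cons.2 ⟨rfl, hl.2.filter_prefix_of_ordConnected hs ha hl.1⟩).isInfix
    · rw [filter_cons_of_neg (by simpa using ha)]
      exact infix_cons (hl.2.filter_infix_of_ordConnected hs)

theorem Pairwise.mem_Icc_of_head?_of_getLast? {l : List α} (hl : l.Pairwise (· ≤ ·))
    {x y z : α} (hx : l.head? = some x) (hy : l.getLast? = some y) (hz : z ∈ l) :
    z ∈ Set.Icc x y :=
  ⟨(head_eq_iff_head?_eq_some _).2 hx ▸ hl.rel_head hz,
    (getLast_eq_iff_getLast?_eq_some _).2 hy ▸ hl.rel_getLast hz⟩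

end List

section Spread

variable {t : ℕ}

theorem add_length_sub_one_mul_le_of_mem_Icc {lo hi : ℕ} :
    ∀ {S : List ℕ}, S.Pairwise (fun a b ↦ a + t ≤ b) → S ≠ [] → (∀ z ∈ S, z ∈ Set.Icc lo hi) →
      lo + (S.length - 1) * t ≤ hi
  | [a], _, _, hS => by simpa using (hS a mem_cons_self).1.trans (hS a mem_cons_self).2
  | a :: b :: S, hp, _, hS => by
    rw [pairwise_cons] at hp
    have hrest := add_length_sub_one_mul_le_of_mem_Icc (lo := a + t) hp.2 (cons_ne_nil b S)
      fun z hz ↦ ⟨hp.1 z hz, (hS z (mem_cons_of_mem a hz)).2⟩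
    have hlo := (hS a mem_cons_self).1
    simp only [length_cons, Nat.add_sub_cancel] at hrest ⊢
    rw [Nat.succ_mul]
    omega

theorem isChain_eq_add_of_mem_Icc {lo : ℕ} :
    ∀ {S : List ℕ}, S.Pairwise (fun a b ↦ a + t ≤ b) →
      (∀ z ∈ S, z ∈ Set.Icc lo (lo + (S.length - 1) * t)) → S.IsChain (fun a b ↦ b = a + t)
  | [], _, _ => isChain_nil
  | [_], _, _ => isChain_singleton _
  | a :: b :: S, hp, hS => by
    obtain ⟨hab, hp'⟩ := pairwise_cons.1 hp
    have hlo := (hS a mem_cons_self).1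
    have hrest : ∀ z ∈ b :: S, z ∈ Set.Icc b (lo + (S.length + 1) * t) := fun z hz ↦
      ⟨(mem_cons.1 hz).elim Eq.ge fun h ↦
          ((pairwise_cons.1 hp').1 z h).trans' (Nat.le_add_right b t),
        by simpa using (hS z (mem_cons_of_mem a hz)).2⟩
    -- the tail `b :: S` needs width `S.length * t`, which leaves no room for `b > a + t`
    have hwidth := add_length_sub_one_mul_le_of_mem_Icc hp' (cons_ne_nil b S) hrest
    simp only [length_cons, Nat.add_sub_cancel, Nat.succ_mul] at hwidth
    have hba : b = a + t := by have := hab b mem_cons_self; omega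
    refine isChain_cons_cons.2 ⟨hba, isChain_eq_add_of_mem_Icc hp' fun z hz ↦ ⟨(hrest z hz).1, ?_⟩⟩
    have := (hrest z hz).2
    simp only [length_cons, Nat.add_sub_cancel, Nat.succ_mul] at this ⊢
    omega

theorem getLast?_eq_add_mul_of_isChain :
    ∀ {S : List ℕ} {x : ℕ}, S.IsChain (fun a b ↦ b = a + t) → S.head? = some x →
      S.getLast? = some (x + (S.length - 1) * t)
  | [], _, _, hx => by simp at hx
  | [_], _, _, hx => by simpa using hx
  | a :: b :: S, x, h, hx => by
    obtain ⟨rfl, h'⟩ := isChain_cons_cons.1 h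
    obtain rfl : a = x := by simpa using hx
    rw [getLast?_cons_cons, getLast?_eq_add_mul_of_isChain h' rfl]
    simp [Nat.succ_mul]
    ring

end Spread

section Blocks

variable {c t : ℕ} {A : List ℕ}

theorem TSpread.pairwise (h : TSpread t A) : A.Pairwise (fun a b ↦ a + t ≤ b) :=
  haveI : Trans (fun a b : ℕ ↦ a + t ≤ b) (fun a b ↦ a + t ≤ b) (fun a b ↦ a + t ≤ b) :=
    ⟨fun hab hbc ↦ by omega⟩
  IsChain.pairwise h

theorem TSpread.sorted (h : TSpread t A) : A.Pairwise (· ≤ ·) :=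
  h.pairwise.imp (by omega)

theorem TSpread.exists_isBlockDecomp (h : TSpread t A) : ∃ Bs, IsBlockDecomp t A Bs := by
  set r : ℕ → ℕ → Bool := fun a b ↦ b == a + t
  refine ⟨A.splitBy r, (flatten_splitBy r A).symm,
    fun B hB ↦ ⟨ne_nil_of_mem_splitBy hB, (isChain_of_mem_splitBy hB).imp (by simp [r])⟩, ?_⟩
  have hsep := isChain_getLast_head_splitBy r A
  have hspread :=
    ((isChain_flatten (nil_notMem_splitBy r A)).1 ((flatten_splitBy r A).symm ▸ h)).2
  show List.IsChain _ _
  rw [isChain_iff_forall_rel_of_append_cons_cons] at hsep hspread ⊢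
  intro B C _ _ hBC x hx y hy
  obtain ⟨_, _, hne⟩ := hsep hBC
  have := hspread hBC x hx y hy
  rw [← getLast_of_mem_getLast? hx, ← head_of_mem_head? hy] at this ⊢
  simp only [r, beq_eq_false_iff_ne] at hne
  omega

theorem IsBlockDecomp.exists_mem_infix {Bs : List (List ℕ)} (hA : IsBlockDecomp t A Bs)
    {R : List ℕ} (hR : R <:+: A) (hRb : IsBlock t R) : ∃ B ∈ Bs, R <:+: B := by
  induction Bs generalizing A with
  | nil => exact (hRb.1 (infix_nil.1 (by simpa [hA.1] using hR))).elim
  | cons B Bs ih =>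
    obtain ⟨rfl, hblocks, hsep⟩ := hA
    rw [flatten_cons, infix_append_iff_ne_nil] at hR
    rcases hR with hRB | hRBs | ⟨R₁, R₂, hR₁, hR₂, rfl, hR₁B, hR₂Bs⟩
    · exact ⟨B, mem_cons_self, hRB⟩
    · obtain ⟨C, hC, hRC⟩ :=
        ih ⟨rfl, fun C hC ↦ hblocks C (mem_cons_of_mem B hC), hsep.tail⟩ hRBs
      exact ⟨C, mem_cons_of_mem B hC, hRC⟩
    · exfalso
      cases Bs with
      | nil => exact hR₂ (prefix_nil.1 hR₂Bs)
      | cons C Bs =>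
        rw [flatten_cons] at hR₂Bs
        have hC := (hblocks C (mem_cons_of_mem B mem_cons_self)).1
        have hjoin := (isChain_append.1 hRb.2).2.2 _ (getLast_mem_getLast? hR₁) _
          (head_mem_head? hR₂)
        have hgap := (isChain_cons_cons.1 hsep).1 _ (getLast_mem_getLast? (hR₁B.ne_nil hR₁)) _
          (head_mem_head? hC)
        rw [hR₁B.getLast hR₁, hR₂Bs.head hR₂, head_append_of_ne_nil hC] at hjoin
        omega

theorem CBounded.length_le_of_infix (hc : CBounded c t A) (hA : TSpread t A) {R : List ℕ}
    (hR : R <:+: A) (hRb : IsBlock t R) : R.length ≤ c := by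
  obtain ⟨Bs, hBs⟩ := hA.exists_isBlockDecomp
  obtain ⟨B, hB, hRB⟩ := hBs.exists_mem_infix hR hRb
  exact hRB.length_le.trans (hc Bs hBs B hB)

theorem cBounded_of_forall_infix (h : ∀ R, R <:+: A → IsBlock t R → R.length ≤ c) :
    CBounded c t A :=
  fun _ hBs B hB ↦ h B (hBs.1 ▸ infix_of_mem_flatten hB) (hBs.2.1 B hB)

theorem TSpread.countP_Icc_le_one (h : TSpread t A) {lo hi : ℕ} (hhi : hi < lo + t) :
    A.countP (· ∈ Set.Icc lo hi) ≤ 1 := by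
  rw [countP_eq_length_filter]
  set F := A.filter (· ∈ Set.Icc lo hi)
  by_contra! hlen
  have hwidth : lo + (F.length - 1) * t ≤ hi :=
    add_length_sub_one_mul_le_of_mem_Icc (h.pairwise.sublist filter_sublist)
    (ne_nil_of_length_pos (by omega)) fun z hz ↦ by simpa using (mem_filter.1 hz).2
  have := Nat.le_mul_of_pos_left t (Nat.sub_pos_of_lt hlen)
  omega

theorem CBounded.countP_Icc_le (hc : CBounded c t A) (hA : TSpread t A) (lo : ℕ) :
    A.countP (· ∈ Set.Icc lo (lo + c * t)) ≤ c := by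
  rw [countP_eq_length_filter]
  by_contra! hlen
  set G := (A.filter (· ∈ Set.Icc lo (lo + c * t))).take (c + 1)
  have hGlen : G.length = c + 1 := by simp only [G, length_take]; omega
  have hGA : G <:+: A := (take_prefix _ _).isInfix.trans
    (hA.sorted.filter_infix_of_ordConnected Set.ordConnected_Icc)
  have hGb : IsBlock t G := ⟨ne_nil_of_length_pos (by omega),
    isChain_eq_add_of_mem_Icc (hA.pairwise.sublist hGA.sublist) fun z hz ↦ by
      simpa [hGlen] using (mem_filter.1 (mem_of_mem_take hz)).2⟩
  have := hc.length_le_of_infix hA hGA hGb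
  omega

end Blocks

section Alternating

theorem alt_false (l : List ℕ) : alt false l = alt true l.tail := by
  cases l <;> rfl

theorem alt_sublist : ∀ (b : Bool) (l : List ℕ), alt b l <+ l
  | _, [] => Sublist.slnil
  | true, a :: l => (alt_sublist false l).cons_cons a
  | false, a :: l => (alt_sublist true l).cons a

theorem length_alt : ∀ (b : Bool) (l : List ℕ), (alt b l).length = (l.length + b.toNat) / 2
  | b, [] => by cases b <;> rfl
  | true, a :: l => by simp [alt, length_alt false l]; omega
  | false, a :: l => by simp [alt, length_alt true l]

theorem head?_alt_true (l : List ℕ) : (alt true l).head? = l.head? := by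
  cases l <;> rfl

theorem getLast?_alt_true : ∀ {l : List ℕ}, Odd l.length → (alt true l).getLast? = l.getLast?
  | [], h => by simp at h
  | [_], _ => rfl
  | a :: b :: l, h => by
    have hl : l ≠ [] := by rintro rfl; simp [Nat.odd_iff] at h
    have ih := getLast?_alt_true (l := l) (by simpa [Nat.odd_add_one] using h)
    simp [alt, getLast?_cons, ih, getLast?_eq_some_getLast hl]

theorem drop_alt_true : ∀ (l : List ℕ) (i : ℕ), (alt true l).drop i = alt true (l.drop (2 * i))
  | _, 0 => rfl
  | [], _ + 1 => by simp [alt]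
  | [_], _ + 1 => by simp [alt, Nat.mul_succ]
  | a :: b :: l, i + 1 => by simp [alt, drop_alt_true l i, Nat.mul_succ]

theorem take_alt_true : ∀ (l : List ℕ) (k : ℕ),
    (alt true l).take (k + 1) = alt true (l.take (2 * k + 1))
  | [], _ => by simp [alt]
  | [_], _ => by simp [alt]
  | _ :: _ :: _, 0 => by simp [alt]
  | a :: b :: l, k + 1 => by simp [alt, ← take_alt_true l k, Nat.mul_succ]

theorem exists_infix_alt_true_eq {l B : List ℕ} (hB : B <:+: alt true l) (hne : B ≠ []) :
    ∃ S, S <:+: l ∧ alt true S = B ∧ S.length = 2 * B.length - 1 := by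
  obtain ⟨s, r, hsr⟩ := hB
  obtain ⟨k, hk⟩ := Nat.exists_eq_add_one_of_ne_zero (length_pos_iff.2 hne).ne'
  have hlen := congrArg length hsr
  simp only [length_append, length_alt, Bool.toNat_true] at hlen
  refine ⟨(l.drop (2 * s.length)).take (2 * k + 1),
    (take_prefix _ _).isInfix.trans (drop_suffix _ _).isInfix, ?_, ?_⟩
  · rw [← take_alt_true, ← drop_alt_true, ← hsr, ← hk]
    simp
  · simp only [length_take, length_drop]
    omega

theorem exists_infix_alt_true_eq_of_infix_alt {l B : List ℕ} (b : Bool) (hB : B <:+: alt b l)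
    (hne : B ≠ []) : ∃ S, S <:+: l ∧ alt true S = B ∧ S.length = 2 * B.length - 1 := by
  cases b
  · rw [alt_false] at hB
    obtain ⟨S, hS, hSB⟩ := exists_infix_alt_true_eq hB hne
    exact ⟨S, hS.trans (tail_suffix l).isInfix, hSB⟩
  · exact exists_infix_alt_true_eq hB hne

theorem le_countP_Icc_of_infix_alt {w B : List ℕ} (hw : w.Pairwise (· ≤ ·)) (b : Bool)
    (hB : B <:+: alt b w) {x y : ℕ} (hx : B.head? = some x) (hy : B.getLast? = some y) :
    2 * B.length - 1 ≤ w.countP (· ∈ Set.Icc x y) := by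
  have hne : B ≠ [] := by rintro rfl; simp at hx
  obtain ⟨S, hSw, rfl, hlen⟩ := exists_infix_alt_true_eq_of_infix_alt b hB hne
  rw [head?_alt_true] at hx
  rw [getLast?_alt_true ⟨(alt true S).length - 1, by grind⟩] at hy
  have hS := hw.sublist hSw.sublist
  calc 2 * (alt true S).length - 1 = S.countP (· ∈ Set.Icc x y) := by
        rw [← hlen, countP_eq_length.2 fun z hz ↦ by
          simpa using hS.mem_Icc_of_head?_of_getLast? hx hy hz]
    _ ≤ w.countP (· ∈ Set.Icc x y) := hSw.sublist.countP_le

end Alternating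

section Sorting

variable {c t : ℕ} {w : List ℕ}

theorem tSpread_alt_of_countP_Icc_le_two (hw : w.Pairwise (· ≤ ·))
    (hcount : ∀ lo hi, hi < lo + t → w.countP (· ∈ Set.Icc lo hi) ≤ 2) (b : Bool) :
    TSpread t (alt b w) :=
  (isChain_isInfix (alt b w)).imp fun x y hxy ↦ by
    have hthree := le_countP_Icc_of_infix_alt hw b hxy (x := x) (y := y) rfl rfl
    by_contra! hyx
    have := hcount x y hyx
    simp only [length_cons, length_nil] at hthree
    omega

theorem cBounded_alt_of_countP_Icc_le (hw : w.Pairwise (· ≤ ·))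
    (hcount : ∀ lo, w.countP (· ∈ Set.Icc lo (lo + c * t)) ≤ 2 * c) (b : Bool) :
    CBounded c t (alt b w) := by
  refine cBounded_of_forall_infix fun R hR ⟨hne, hchain⟩ ↦ ?_
  by_contra! hlen
  obtain ⟨x, R, rfl⟩ := exists_cons_of_ne_nil hne
  have hG : x :: R.take c <+: x :: R := by simp [take_prefix]
  have hGlen : (x :: R.take c).length = c + 1 := by simp at hlen ⊢; omega
  have hmany := le_countP_Icc_of_infix_alt hw b (hG.isInfix.trans hR) rfl
    (getLast?_eq_add_mul_of_isChain (hchain.prefix hG) rfl)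
  rw [hGlen, Nat.add_sub_cancel] at hmany
  have := hcount x
  omega

end Sorting

/-- The minimal generating set of the `c`-bounded `t`-spread
Veronese ideal is sortable: if `u, v` are `c`-bounded `t`-spread (index lists
of) monomials of degree `d` in `[n]`, and `w = (i₁ ≤ i₂ ≤ … ≤ i_{2d})` is the
weakly increasing arrangement of the combined multiset of `u` and `v`, then
`v' = (i₁, i₃, …, i_{2d-1})` and `u' = (i₂, i₄, …, i_{2d})` are again
`c`-bounded `t`-spread of degree `d`. -/
theorem stmt_1 (c n d t : ℕ) (u v : List ℕ)
    (hu : u ∈ Gen c n d t) (hv : v ∈ Gen c n d t)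
    (w : List ℕ) (hw : (↑w : Multiset ℕ) = (↑u : Multiset ℕ) + (↑v : Multiset ℕ))
    (hws : w.Pairwise (· ≤ ·)) :
    alt true w ∈ Gen c n d t ∧ alt false w ∈ Gen c n d t := by
  obtain ⟨hud, hut, huc, hun⟩ := hu
  obtain ⟨hvd, hvt, hvc, hvn⟩ := hv
  have hperm : w ~ u ++ v := Multiset.coe_eq_coe.1 (by simpa using hw)
  have hcount (p : ℕ → Bool) : w.countP p = u.countP p + v.countP p := by
    rw [hperm.countP_eq, countP_append]
  have hlen : w.length = 2 * d := by rw [hperm.length_eq, length_append]; omega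
  have hmem (i : ℕ) (hi : i ∈ w) : 1 ≤ i ∧ i ≤ n :=
    (mem_append.1 (hperm.subset hi)).elim (hun i) (hvn i)
  have hspread (lo hi : ℕ) (h : hi < lo + t) : w.countP (· ∈ Set.Icc lo hi) ≤ 2 := by
    have := hut.countP_Icc_le_one h
    have := hvt.countP_Icc_le_one h
    rw [hcount]
    omega
  have hbounded (lo : ℕ) : w.countP (· ∈ Set.Icc lo (lo + c * t)) ≤ 2 * c := by
    have := huc.countP_Icc_le hut lo
    have := hvc.countP_Icc_le hvt lo
    rw [hcount]
    omega
  have hgen (b : Bool) : alt b w ∈ Gen c n d t := by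
    refine ⟨?_, tSpread_alt_of_countP_Icc_le_two hws hspread b,
      cBounded_alt_of_countP_Icc_le hws hbounded b, fun i hi ↦ hmem i ((alt_sublist b w).subset hi)⟩
    have := Bool.toNat_le b
    rw [length_alt, hlen]
    omega
  exact ⟨hgen true, hgen false⟩
end

section
/- The Kalai stretching operator gives a bijection between the minimal generators of I_{c,(n,d,t)} and the minimal generators of I_{c,(n+d-1,d,t+1)}: a monomial v is a generator of I_{c,(n+d-1,d,t+1)} if and only if v = u^σ for some generator u of I_{c,(n,d,t)}. -/
/-- Kalai stretching operator on sorted lists of indices: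
`{i₁ ≤ i₂ ≤ … ≤ i_d} ↦ {i₁, i₂+1, …, i_d+(d-1)}`. -/
def kalai (A : List ℕ) : List ℕ :=
  A.mapIdx (fun i a => a + i)

/-!
The stretching `aᵢ ↦ aᵢ + i` turns a gap `b - a` between consecutive entries into `b - a + 1`.
Hence it maps `t`-spread lists bijectively onto `(t+1)`-spread ones, carries runs of
difference `t` to runs of difference `t + 1` of the same length (so maximal blocks, and with
them `c`-boundedness, correspond), and moves the first entry by `0` and the last by `d - 1`,
which shifts the admissible range `[1, n]` to `[1, n + d - 1]`.
-/

namespace List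

variable {α β : Type*}

/-- `offsetMap w g k [x₀, x₁, x₂, …] = [g k x₀, g (k + w x₀) x₁, g (k + w x₀ + w x₁) x₂, …]`. -/
def offsetMap (w : α → ℕ) (g : ℕ → α → β) : ℕ → List α → List β
  | _, [] => []
  | k, x :: xs => g k x :: offsetMap w g (k + w x) xs

variable {w : α → ℕ} {g : ℕ → α → β}

@[simp]
theorem length_offsetMap (k : ℕ) (l : List α) : (offsetMap w g k l).length = l.length := by
  induction l generalizing k <;> simp [offsetMap, *]

theorem isChain_offsetMap_iff {R : β → β → Prop} {S : α → α → Prop}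
    (h : ∀ k x y, R (g k x) (g (k + w x) y) ↔ S x y) {k : ℕ} {l : List α} :
    (offsetMap w g k l).IsChain R ↔ l.IsChain S := by
  induction l generalizing k with
  | nil => simp [offsetMap]
  | cons x l ih =>
    cases l with
    | nil => simp [offsetMap]
    | cons y l =>
      rw [offsetMap, offsetMap, isChain_cons_cons, isChain_cons_cons, h, ← offsetMap, ih]

theorem forall_mem_offsetMap_iff {P : β → Prop} {Q : α → Prop} (h : ∀ k x, P (g k x) ↔ Q x)
    {k : ℕ} {l : List α} : (∀ y ∈ offsetMap w g k l, P y) ↔ ∀ x ∈ l, Q x := by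
  induction l generalizing k with
  | nil => simp [offsetMap]
  | cons x l ih => simp only [offsetMap, forall_mem_cons, h, ih]

theorem Pairwise.forall_mem_bounds_iff [Preorder α] {l : List α} (hl : l.Pairwise (· ≤ ·))
    {lo hi : α} :
    (∀ i ∈ l, lo ≤ i ∧ i ≤ hi) ↔ (∀ x ∈ l.head?, lo ≤ x) ∧ ∀ x ∈ l.getLast?, x ≤ hi := by
  refine ⟨fun h => ⟨fun x hx => (h x (mem_of_mem_head? hx)).1,
    fun x hx => (h x (mem_of_mem_getLast? hx)).2⟩, ?_⟩
  rintro ⟨hlo, hhi⟩ i hi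
  refine ⟨(hlo _ (head?_eq_some_head (ne_nil_of_mem hi))).trans ?_,
    (hl.rel_getLast hi).trans (hhi _ (getLast?_eq_some_getLast (ne_nil_of_mem hi)))⟩
  cases l with
  | nil => cases hi
  | cons a l =>
    rcases mem_cons.1 hi with rfl | hi
    · exact le_rfl
    · exact rel_of_pairwise_cons hl hi

end List

namespace Kalai

open List

/-- `stretch k [a₀, a₁, a₂, …] = [a₀ + k, a₁ + (k + 1), a₂ + (k + 2), …]`. -/
def stretch : ℕ → List ℕ → List ℕ :=
  offsetMap (fun _ => 1) (fun k a => a + k)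

def stretchBlocks : ℕ → List (List ℕ) → List (List ℕ) :=
  offsetMap length stretch

@[simp]
theorem stretch_nil (k : ℕ) : stretch k [] = [] := rfl

@[simp]
theorem stretch_cons (k a : ℕ) (A : List ℕ) : stretch k (a :: A) = (a + k) :: stretch (k + 1) A :=
  rfl

@[simp]
theorem length_stretch (k : ℕ) (A : List ℕ) : (stretch k A).length = A.length :=
  length_offsetMap k A

theorem mapIdx_eq_stretch (k : ℕ) (A : List ℕ) :
    A.mapIdx (fun i a => a + (k + i)) = stretch k A := by
  induction A generalizing k with
  | nil => rfl
  | cons a A ih =>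
    rw [mapIdx_cons, stretch_cons, ← ih]
    congr 2
    funext i a
    omega

theorem kalai_eq_stretch (A : List ℕ) : kalai A = stretch 0 A := by
  rw [kalai, ← mapIdx_eq_stretch]
  simp

theorem stretch_append (k : ℕ) (A B : List ℕ) :
    stretch k (A ++ B) = stretch k A ++ stretch (k + A.length) B := by
  induction A generalizing k with
  | nil => simp
  | cons a A ih => simp [ih, Nat.add_assoc, Nat.add_comm 1]

theorem head?_stretch (k : ℕ) (A : List ℕ) : (stretch k A).head? = A.head?.map (· + k) := by
  cases A <;> rfl

theorem getLast?_stretch (k : ℕ) (A : List ℕ) :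
    (stretch k A).getLast? = A.getLast?.map (· + (k + A.length - 1)) := by
  induction A generalizing k with
  | nil => rfl
  | cons a A ih =>
    cases A with
    | nil => simp
    | cons b A =>
      rw [stretch_cons, getLast?_cons_of_ne_nil (by simp), ih, getLast?_cons_cons]
      simp [Nat.add_assoc, Nat.add_comm 1]

theorem flatten_stretchBlocks (k : ℕ) (Cs : List (List ℕ)) :
    (stretchBlocks k Cs).flatten = stretch k Cs.flatten := by
  induction Cs generalizing k with
  | nil => rfl
  | cons C Cs ih => exact (congrArg (stretch k C ++ ·) (ih _)).trans (stretch_append k C _).symm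

theorem exists_of_stretch_eq_append {k : ℕ} {A B C : List ℕ} (h : stretch k A = B ++ C) :
    ∃ A₁ A₂, A = A₁ ++ A₂ ∧ B = stretch k A₁ ∧ C = stretch (k + A₁.length) A₂ := by
  induction A generalizing k B with
  | nil =>
    obtain ⟨rfl, rfl⟩ := append_eq_nil_iff.1 h.symm
    exact ⟨[], [], rfl, rfl, rfl⟩
  | cons a A ih =>
    cases B with
    | nil => exact ⟨[], a :: A, rfl, rfl, by simpa using h.symm⟩
    | cons b B =>
      rw [stretch_cons, cons_append, cons_eq_cons] at h
      obtain ⟨rfl, h⟩ := h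
      obtain ⟨A₁, A₂, rfl, rfl, rfl⟩ := ih h
      exact ⟨a :: A₁, A₂, rfl, rfl, by simp [Nat.add_assoc, Nat.add_comm 1]⟩

theorem exists_eq_stretchBlocks {k : ℕ} {A : List ℕ} {Bs : List (List ℕ)}
    (h : Bs.flatten = stretch k A) : ∃ Cs, Cs.flatten = A ∧ Bs = stretchBlocks k Cs := by
  induction Bs generalizing k A with
  | nil =>
    refine ⟨[], ?_, rfl⟩
    simpa [eq_comm (a := []), ← length_eq_zero_iff] using h
  | cons B Bs ih =>
    obtain ⟨A₁, A₂, rfl, rfl, h₂⟩ := exists_of_stretch_eq_append h.symm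
    obtain ⟨Cs, rfl, rfl⟩ := ih h₂
    exact ⟨A₁ :: Cs, rfl, rfl⟩

theorem exists_stretch_eq {v : List ℕ} (hv : v.IsChain (· < ·)) {k : ℕ}
    (hk : ∀ x ∈ v.head?, k ≤ x) : ∃ u, stretch k u = v := by
  induction v generalizing k with
  | nil => exact ⟨[], rfl⟩
  | cons a v ih =>
    rw [isChain_cons] at hv
    have ha : k ≤ a := hk a rfl
    obtain ⟨u, hu⟩ := ih hv.2 (k := k + 1) fun x hx => by have := hv.1 x hx; omega
    exact ⟨(a - k) :: u, by rw [stretch_cons, hu, Nat.sub_add_cancel ha]⟩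

theorem isChain_stretch_iff {R S : ℕ → ℕ → Prop} (h : ∀ k a b, R (a + k) (b + (k + 1)) ↔ S a b)
    {k : ℕ} {A : List ℕ} : (stretch k A).IsChain R ↔ A.IsChain S :=
  isChain_offsetMap_iff h

theorem pairwise_stretch {k : ℕ} {A : List ℕ} (hA : A.Pairwise (· ≤ ·)) :
    (stretch k A).Pairwise (· ≤ ·) := by
  rw [← isChain_iff_pairwise] at hA ⊢
  exact ((isChain_stretch_iff (R := (· < ·)) fun _ _ _ => by omega).2 hA).imp fun _ _ => le_of_lt

theorem forall_mem_bounds_stretch_iff {k lo hi : ℕ} {A : List ℕ} (hA : A.Pairwise (· ≤ ·)) :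
    (∀ i ∈ stretch k A, lo + k ≤ i ∧ i ≤ hi + k + A.length - 1) ↔ ∀ i ∈ A, lo ≤ i ∧ i ≤ hi := by
  rw [(pairwise_stretch hA).forall_mem_bounds_iff, hA.forall_mem_bounds_iff, head?_stretch,
    getLast?_stretch]
  cases A with
  | nil => simp
  | cons a A =>
    simp only [Option.mem_map, forall_exists_index, and_imp, forall_apply_eq_imp_iff₂,
      length_cons, Nat.add_le_add_iff_right]
    refine and_congr_right fun _ => forall₂_congr fun x _ => ?_
    omega

theorem tSpread_stretch_iff {t k : ℕ} {A : List ℕ} : TSpread (t + 1) (stretch k A) ↔ TSpread t A :=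
  isChain_stretch_iff fun _ _ _ => by omega

theorem TSpread.pairwise_le {t : ℕ} {A : List ℕ} (h : TSpread t A) : A.Pairwise (· ≤ ·) :=
  isChain_iff_pairwise.1 (h.imp fun _ _ h => by omega)

theorem isBlock_stretch_iff {t k : ℕ} {C : List ℕ} : IsBlock (t + 1) (stretch k C) ↔ IsBlock t C :=
  and_congr (by cases C <;> simp) (isChain_stretch_iff fun _ _ _ => by omega)

theorem gap_stretch_iff {t k : ℕ} {C D : List ℕ} :
    (∀ x ∈ (stretch k C).getLast?, ∀ y ∈ (stretch (k + C.length) D).head?, x + (t + 1) < y) ↔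
      ∀ x ∈ C.getLast?, ∀ y ∈ D.head?, x + t < y := by
  simp only [getLast?_stretch, head?_stretch, Option.mem_map, forall_exists_index, and_imp,
    forall_apply_eq_imp_iff₂]
  refine forall₂_congr fun x hx => forall₂_congr fun y _ => ?_
  have := length_pos_of_mem (mem_of_mem_getLast? hx)
  omega

theorem isBlockDecomp_stretchBlocks_iff {t k : ℕ} {A : List ℕ} {Cs : List (List ℕ)}
    (hA : Cs.flatten = A) :
    IsBlockDecomp (t + 1) (stretch k A) (stretchBlocks k Cs) ↔ IsBlockDecomp t A Cs := by
  subst hA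
  simp only [IsBlockDecomp, flatten_stretchBlocks, true_and]
  exact and_congr (forall_mem_offsetMap_iff (g := stretch) fun _ _ => isBlock_stretch_iff)
    (isChain_offsetMap_iff (g := stretch) fun _ _ _ => gap_stretch_iff)

theorem cBounded_stretch_iff {c t k : ℕ} {A : List ℕ} :
    CBounded c (t + 1) (stretch k A) ↔ CBounded c t A := by
  have hlen (Cs : List (List ℕ)) :
      (∀ B ∈ stretchBlocks k Cs, B.length ≤ c) ↔ ∀ C ∈ Cs, C.length ≤ c :=
    forall_mem_offsetMap_iff fun _ C => by rw [length_stretch]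
  constructor
  · intro h Cs hCs
    exact (hlen Cs).1 (h _ ((isBlockDecomp_stretchBlocks_iff hCs.1.symm).2 hCs))
  · intro h Bs hBs
    obtain ⟨Cs, rfl, rfl⟩ := exists_eq_stretchBlocks hBs.1.symm
    exact (hlen Cs).2 (h Cs ((isBlockDecomp_stretchBlocks_iff rfl).1 hBs))

theorem kalai_mem_gen_iff {c n d t : ℕ} {u : List ℕ} :
    kalai u ∈ Gen c (n + d - 1) d (t + 1) ↔ u ∈ Gen c n d t := by
  simp only [kalai_eq_stretch, Gen, Set.mem_ofPred_eq, length_stretch, tSpread_stretch_iff,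
    cBounded_stretch_iff]
  constructor <;> rintro ⟨rfl, hsp, hcb, hb⟩ <;> refine ⟨rfl, hsp, hcb, ?_⟩
  exacts [(forall_mem_bounds_stretch_iff (TSpread.pairwise_le hsp)).1 hb,
    (forall_mem_bounds_stretch_iff (TSpread.pairwise_le hsp)).2 hb]

end Kalai

open Kalai in
/-- The Kalai stretching operator is a bijection between the
minimal generators of `I_{c,(n,d,t)}` and those of `I_{c,(n+d-1,d,t+1)}`:
`v` is a generator of the latter iff `v = u^σ` for a generator `u` of the
former. -/
theorem stmt_3 (c n d t : ℕ) (v : List ℕ) :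
    v ∈ Gen c (n + d - 1) d (t + 1) ↔ ∃ u ∈ Gen c n d t, v = kalai u := by
  constructor
  · intro hv
    obtain ⟨u, rfl⟩ := exists_stretch_eq (k := 0) (hv.2.1.imp fun _ _ h => by omega) (by simp)
    rw [← kalai_eq_stretch] at hv ⊢
    exact ⟨u, kalai_mem_gen_iff.1 hv, rfl⟩
  · rintro ⟨u, hu, rfl⟩
    exact kalai_mem_gen_iff.2 hu
end

section
/- Write d = kc + r with 0 < r ≤ c (so k = ⌊(d−1)/c⌋). The set of minimal generators of I_{c,(n,d,t)}, partially ordered so that u covers v whenever v = x_i(u/x_j) for some i < j with x_j | u, has a unique maximal element x_{a_1}⋯x_{a_d} with a_{d−i+1} = n − (i−1)t − ⌊(i−1)/c⌋ for i = 1,...,d, and a unique minimal element x_{α_1}⋯x_{α_d} with α_i = (i−1)t + ⌊(i−1)/c⌋ + 1 for i = 1,...,d. -/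
/-- Generators of `I_{c,(n,d,t)}` as multisets of indices. -/
def GenM (c n d t : ℕ) : Set (Multiset ℕ) :=
  {m | m.sort (· ≤ ·) ∈ Gen c n d t}

/-- `u` covers `v` in the partial order on generators of `I_{c,(n,d,t)}`:
there are `i < j` with `x_j ∣ u` and `v = x_i · u / x_j`. -/
def Covers (c n d t : ℕ) (v u : Multiset ℕ) : Prop :=
  v ∈ GenM c n d t ∧ u ∈ GenM c n d t ∧
    ∃ i j, i < j ∧ j ∈ u ∧ v = i ::ₘ u.erase j

/-!
Since the blocks of a `t`-spread monomial are separated by gaps larger than `t`, being `c`-bounded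
means that among any `c` consecutive steps of the index sequence `a` one exceeds `t`. Hence
`a_{p+s} ≥ a_p + s t + ⌊s/c⌋`, which squeezes every generator componentwise between the two
extremal sequences; the maximal one is the image of the minimal one under `x_i ↦ x_{n+1-i}`.
Conversely, if `u ≤ v` componentwise, replacing the entries of `v` by those of `u` from left to
right never leaves the generating set (each cut point where they differ is a gap larger than `t`)
and each proper replacement is a covering step, so `u` lies below `v`.
-/

theorem List.IsChain.and {α : Type*} {R S : α → α → Prop} {l : List α}
    (hR : l.IsChain R) (hS : l.IsChain S) : l.IsChain fun a b => R a b ∧ S a b := by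
  rw [List.isChain_iff_getElem] at *
  exact fun i hi => ⟨hR i hi, hS i hi⟩

theorem isBlockDecomp_splitBy {t : ℕ} {A : List ℕ} (hA : TSpread t A) :
    IsBlockDecomp t A (A.splitBy fun a b => b == a + t) := by
  refine ⟨(List.flatten_splitBy (fun a b => b == a + t) A).symm,
    fun B hB => ⟨List.ne_nil_of_mem_splitBy hB,
      (List.isChain_of_mem_splitBy hB).imp fun a b h => by simpa using h⟩, ?_⟩
  have hle := ((List.isChain_flatten (List.nil_notMem_splitBy (fun a b => b == a + t) A)).mp
    (by rwa [List.flatten_splitBy])).2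
  refine (hle.and (List.isChain_getLast_head_splitBy (fun a b => b == a + t) A)).imp ?_
  rintro B C ⟨hBC, hB, hC, hne⟩ x hx y hy
  rw [List.getLast?_eq_some_getLast hB, Option.mem_some_iff] at hx
  rw [List.head?_eq_some_head hC, Option.mem_some_iff] at hy
  subst hx hy
  have := hBC _ (List.getLast?_eq_some_getLast hB) _ (List.head?_eq_some_head hC)
  simp only [beq_eq_false_iff_ne] at hne
  omega

def NoLongRun (c t d : ℕ) (f : ℕ → ℕ) : Prop :=
  ∀ p, p + c < d → ∃ q < c, f (p + q) + t ≠ f (p + q + 1)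

theorem NoLongRun.congr {c t d : ℕ} {f g : ℕ → ℕ} (hf : NoLongRun c t d f)
    (hfg : ∀ i < d, f i = g i) : NoLongRun c t d g := by
  intro p hp
  obtain ⟨q, hq, hne⟩ := hf p hp
  exact ⟨q, hq, by rwa [← hfg _ (by omega), ← hfg _ (by omega)]⟩

theorem noLongRun_of_isBlockDecomp {c t : ℕ} {A : List ℕ} {Bs : List (List ℕ)}
    (hA : IsBlockDecomp t A Bs) (hBs : ∀ B ∈ Bs, B.length ≤ c) :
    NoLongRun c t A.length (A.getD · 0) := by
  obtain ⟨rfl, hblock, hgap⟩ := hA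
  induction Bs with
  | nil => intro p hp; simp at hp
  | cons B Bs ih =>
    intro p hp
    simp only [List.flatten_cons, List.length_append] at hp ⊢
    have hBc := hBs B List.mem_cons_self
    by_cases hpB : B.length ≤ p
    · obtain ⟨q, hq, hne⟩ := ih (fun C hC => hBs C (List.mem_cons_of_mem _ hC))
        (fun C hC => hblock C (List.mem_cons_of_mem _ hC)) hgap.tail (p - B.length) (by omega)
      refine ⟨q, hq, ?_⟩
      rw [List.getD_append_right _ _ _ _ (by omega), List.getD_append_right _ _ _ _ (by omega),
        show p + q - B.length = p - B.length + q by omega,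
        show p + q + 1 - B.length = p - B.length + q + 1 by omega]
      exact hne
    · obtain ⟨C, Cs, rfl⟩ : ∃ C Cs, Bs = C :: Cs := by
        cases Bs with
        | nil => simp only [List.flatten_nil, List.length_nil] at hp; omega
        | cons C Cs => exact ⟨C, Cs, rfl⟩
      obtain ⟨B₀, b, rfl⟩ := (List.eq_nil_or_concat B).resolve_left (hblock B (by simp)).1
      obtain ⟨c₀, C₀, rfl⟩ := List.exists_cons_of_ne_nil (hblock C (by simp)).1
      have hbc := (List.isChain_cons_cons.mp hgap).1 b (by simp) c₀ (by simp)
      simp only [List.concat_eq_append, List.length_append, List.length_singleton] at hpB hBc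
      refine ⟨B₀.length - p, by omega, ?_⟩
      rw [show p + (B₀.length - p) = B₀.length by omega]
      have hsplit : B₀.concat b ++ ((c₀ :: C₀) :: Cs).flatten =
          B₀ ++ b :: c₀ :: (C₀ ++ Cs.flatten) := by simp
      rw [hsplit, List.getD_append_right _ _ _ _ le_rfl,
        List.getD_append_right _ _ _ _ (by omega), Nat.sub_self, Nat.add_sub_cancel_left]
      exact hbc.ne

theorem cBounded_of_noLongRun {c t : ℕ} {A : List ℕ}
    (hA : NoLongRun c t A.length (A.getD · 0)) : CBounded c t A := by
  rintro Bs ⟨rfl, hblock, -⟩ B hB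
  obtain ⟨s, u, hsu⟩ := List.infix_of_mem_flatten hB
  by_contra! hlen
  rw [← hsu] at hA
  obtain ⟨q, hq, hne⟩ := hA s.length (by simp; omega)
  have hgetD : ∀ j (hj : j < B.length), (s ++ B ++ u).getD (s.length + j) 0 = B[j] := by
    intro j hj
    rw [List.append_assoc, List.getD_append_right _ _ _ _ (by omega), Nat.add_sub_cancel_left,
      List.getD_append _ _ _ _ hj, List.getD_eq_getElem _ _ hj]
  have hsucc := hgetD (q + 1) (by omega)
  rw [← add_assoc] at hsucc
  refine hne ?_
  dsimp only
  rw [hgetD q (by omega), hsucc, List.isChain_iff_getElem.mp (hblock B hB).2 q (by omega)]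

theorem noLongRun_of_cBounded {c t : ℕ} {A : List ℕ} (hts : TSpread t A)
    (hcb : CBounded c t A) : NoLongRun c t A.length (A.getD · 0) :=
  noLongRun_of_isBlockDecomp (isBlockDecomp_splitBy hts) (hcb _ (isBlockDecomp_splitBy hts))

-- `minSeq c t i` is the paper's `α_{i+1}`: indices are shifted to start at `0`.
def minSeq (c t i : ℕ) : ℕ := i * t + i / c + 1

theorem minSeq_succ (c t i : ℕ) :
    minSeq c t (i + 1) = minSeq c t i + t + if c ∣ i + 1 then 1 else 0 := by
  rw [minSeq, minSeq, Nat.succ_div]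
  ring

theorem minSeq_mono (c t : ℕ) : Monotone (minSeq c t) := fun _ _ h =>
  Nat.add_le_add_right (Nat.add_le_add (Nat.mul_le_mul_right t h) (Nat.div_le_div_right h)) 1

-- `x_{f 0} ⋯ x_{f (d - 1)}` is a minimal generator of `I_{c,(n,d,t)}`.
structure IsGenSeq (c n d t : ℕ) (f : ℕ → ℕ) : Prop where
  spread : ∀ i, i + 1 < d → f i + t ≤ f (i + 1)
  noLongRun : NoLongRun c t d f
  one_le : ∀ i < d, 1 ≤ f i
  le : ∀ i < d, f i ≤ n

section GenSeq

variable {c n d t : ℕ} {f g : ℕ → ℕ}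

theorem IsGenSeq.congr (hf : IsGenSeq c n d t f) (hfg : ∀ i < d, f i = g i) :
    IsGenSeq c n d t g where
  spread i hi := by rw [← hfg i (by omega), ← hfg (i + 1) hi]; exact hf.spread i hi
  noLongRun := hf.noLongRun.congr hfg
  one_le i hi := hfg i hi ▸ hf.one_le i hi
  le i hi := hfg i hi ▸ hf.le i hi

theorem map_range_mem_gen_iff : (List.range d).map f ∈ Gen c n d t ↔ IsGenSeq c n d t f := by
  have hgetD : ∀ i < d, ((List.range d).map f).getD i 0 = f i := fun i hi => by
    rw [List.getD_eq_getElem _ _ (by simpa using hi)]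
    simp
  have hspread :
      TSpread t ((List.range d).map f) ↔ ∀ i, i + 1 < d → f i + t ≤ f (i + 1) := by
    show List.IsChain _ _ ↔ _
    simp [List.isChain_iff_getElem]
  constructor
  · rintro ⟨-, hts, hcb, hbd⟩
    have hrun := noLongRun_of_cBounded hts hcb
    rw [List.length_map, List.length_range] at hrun
    have hmem : ∀ i < d, f i ∈ (List.range d).map f :=
      fun i hi => List.mem_map_of_mem (List.mem_range.mpr hi)
    exact ⟨hspread.mp hts, hrun.congr hgetD, fun i hi => (hbd _ (hmem i hi)).1,
      fun i hi => (hbd _ (hmem i hi)).2⟩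
  · intro hf
    refine ⟨by simp, hspread.mpr hf.spread, cBounded_of_noLongRun ?_, ?_⟩
    · rw [List.length_map, List.length_range]
      exact hf.noLongRun.congr fun i hi => (hgetD i hi).symm
    · simp only [List.mem_map, List.mem_range]
      rintro _ ⟨i, hi, rfl⟩
      exact ⟨hf.one_le i hi, hf.le i hi⟩

theorem mem_genM_iff {u : Multiset ℕ} :
    u ∈ GenM c n d t ↔ ∃ f, IsGenSeq c n d t f ∧ u = ↑((List.range d).map f) := by
  constructor
  · intro hu
    set L := u.sort (· ≤ ·)
    have hLgen : L ∈ Gen c n d t := hu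
    have hL : L = (List.range d).map (L.getD · 0) := by
      apply List.ext_getElem (by simp [hLgen.1])
      intro i h₁ h₂
      simp [h₁]
    refine ⟨_, map_range_mem_gen_iff.mp (hL ▸ hLgen), ?_⟩
    rw [← hL, Multiset.sort_eq]
  · rintro ⟨f, hf, rfl⟩
    have hgen := map_range_mem_gen_iff.mpr hf
    have hsorted : ((List.range d).map f).Pairwise (· ≤ ·) :=
      List.isChain_iff_pairwise.mp (hgen.2.1.imp fun a b h => by omega)
    rwa [GenM, Set.mem_ofPred_eq, Multiset.coe_sort, List.mergeSort_eq_self _ hsorted]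

theorem IsGenSeq.add_mul_le (hf : IsGenSeq c n d t f) {p s : ℕ} (hps : p + s < d) :
    f p + s * t ≤ f (p + s) := by
  induction s with
  | zero => simp
  | succ s ih =>
    have := hf.spread (p + s) (by omega)
    rw [Nat.succ_mul, ← add_assoc]
    exact (Nat.add_le_add_right (ih (by omega)) t).trans this

theorem IsGenSeq.add_mul_lt (hf : IsGenSeq c n d t f) {p : ℕ} (hp : p + c < d) :
    f p + c * t < f (p + c) := by
  obtain ⟨q, hq, hne⟩ := hf.noLongRun p hp
  obtain ⟨r, rfl⟩ : ∃ r, c = q + 1 + r := ⟨c - q - 1, by omega⟩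
  have h₁ := hf.add_mul_le (p := p) (s := q) (by omega)
  have h₂ := hf.spread (p + q) (by omega)
  have h₃ := hf.add_mul_le (p := p + q + 1) (s := r) (by omega)
  rw [show p + q + 1 + r = p + (q + 1 + r) by omega] at h₃
  have : (q + 1 + r) * t = q * t + t + r * t := by ring
  omega

theorem IsGenSeq.add_mul_add_div_le (hc : 0 < c) (hf : IsGenSeq c n d t f) {p s : ℕ}
    (hps : p + s < d) : f p + (s * t + s / c) ≤ f (p + s) := by
  induction s using Nat.strong_induction_on generalizing p with
  | _ s ih =>
    by_cases hs : s < c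
    · rw [Nat.div_eq_of_lt hs, add_zero]
      exact hf.add_mul_le hps
    obtain ⟨s, rfl⟩ : ∃ s', s = s' + c := ⟨s - c, by omega⟩
    have h₁ := hf.add_mul_lt (p := p) (by omega)
    have h₂ := ih s (by omega) (p := p + c) (by omega)
    rw [Nat.add_div_right s hc, add_mul, show p + c + s = p + (s + c) by omega] at *
    omega

theorem IsGenSeq.minSeq_le (hc : 0 < c) (hf : IsGenSeq c n d t f) {i : ℕ} (hi : i < d) :
    minSeq c t i ≤ f i := by
  have := hf.add_mul_add_div_le hc (p := 0) (s := i) (by omega)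
  have := hf.one_le 0 (by omega)
  rw [zero_add] at *
  unfold minSeq
  omega

theorem IsGenSeq.le_sub_minSeq (hc : 0 < c) (hf : IsGenSeq c n d t f) {i : ℕ} (hi : i < d) :
    f i ≤ n + 1 - minSeq c t (d - 1 - i) := by
  have := hf.add_mul_add_div_le hc (p := i) (s := d - 1 - i) (by omega)
  have := hf.le (d - 1) (by omega)
  rw [show i + (d - 1 - i) = d - 1 by omega] at *
  unfold minSeq
  omega

theorem isGenSeq_minSeq (hc : 0 < c) (hn : minSeq c t (d - 1) ≤ n) :
    IsGenSeq c n d t (minSeq c t) where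
  spread i _ := by rw [minSeq_succ]; omega
  noLongRun p _ := by
    have hdvd : c ∣ p + (c - 1 - p % c) + 1 :=
      ⟨p / c + 1, by have := Nat.div_add_mod p c; have := Nat.mod_lt p hc; rw [mul_add]; omega⟩
    refine ⟨c - 1 - p % c, by omega, ?_⟩
    rw [minSeq_succ, if_pos hdvd]
    omega
  one_le i _ := by simp [minSeq]
  le i hi := (minSeq_mono c t (by omega)).trans hn

theorem IsGenSeq.reflect (hf : IsGenSeq c n d t f) :
    IsGenSeq c n d t fun i => n + 1 - f (d - 1 - i) where
  spread i hi := by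
    have h₁ := hf.spread (d - 1 - (i + 1)) (by omega)
    have h₂ := hf.le (d - 1 - i) (by omega)
    rw [show d - 1 - (i + 1) + 1 = d - 1 - i by omega] at h₁
    omega
  noLongRun p hp := by
    obtain ⟨q, hq, hne⟩ := hf.noLongRun (d - 1 - p - c) (by omega)
    refine ⟨c - 1 - q, by omega, ?_⟩
    dsimp only
    have h₁ := hf.le (d - 1 - p - c + q) (by omega)
    have h₂ := hf.le (d - 1 - p - c + q + 1) (by omega)
    have h₃ := hf.spread (d - 1 - p - c + q) (by omega)
    rw [show d - 1 - (p + (c - 1 - q)) = d - 1 - p - c + q + 1 by omega,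
      show d - 1 - (p + (c - 1 - q) + 1) = d - 1 - p - c + q by omega]
    omega
  one_le i hi := by have := hf.le (d - 1 - i) (by omega); omega
  le i hi := by have := hf.one_le (d - 1 - i) (by omega); omega

theorem IsGenSeq.piecewise (hf : IsGenSeq c n d t f) (hg : IsGenSeq c n d t g) {k : ℕ}
    (hk : 0 < k → k < d → f (k - 1) + t < g k) :
    IsGenSeq c n d t fun i => if i < k then f i else g i where
  spread i hi := by
    split_ifs with h₁ h₂ h₂
    · exact hf.spread i hi
    · have := hk (by omega) (by omega)
      rw [show k - 1 = i by omega, show k = i + 1 by omega] at this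
      omega
    · omega
    · exact hg.spread i hi
  noLongRun p hp := by
    dsimp only
    by_cases hpk : p + c < k
    · obtain ⟨q, hq, hne⟩ := hf.noLongRun p hp
      exact ⟨q, hq, by rwa [if_pos (by omega), if_pos (by omega)]⟩
    by_cases hkp : k ≤ p
    · obtain ⟨q, hq, hne⟩ := hg.noLongRun p hp
      exact ⟨q, hq, by rwa [if_neg (by omega), if_neg (by omega)]⟩
    refine ⟨k - 1 - p, by omega, ?_⟩
    have := hk (by omega) (by omega)
    rw [if_pos (by omega), if_neg (by omega), show p + (k - 1 - p) = k - 1 by omega,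
      show k - 1 + 1 = k by omega]
    omega
  one_le i hi := by split_ifs; exacts [hf.one_le i hi, hg.one_le i hi]
  le i hi := by split_ifs; exacts [hf.le i hi, hg.le i hi]

theorem covers_map_range (hf : IsGenSeq c n d t f) (hg : IsGenSeq c n d t g) {k : ℕ}
    (hk : k < d) (hlt : g k < f k) (heq : ∀ i < d, i ≠ k → g i = f i) :
    Covers c n d t ↑((List.range d).map g) ↑((List.range d).map f) := by
  refine ⟨mem_genM_iff.mpr ⟨g, hg, rfl⟩, mem_genM_iff.mpr ⟨f, hf, rfl⟩, g k, f k, hlt,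
    Multiset.mem_coe.mpr (List.mem_map_of_mem (List.mem_range.mpr hk)), ?_⟩
  rw [← Multiset.map_coe, ← Multiset.map_coe, Multiset.coe_range,
    ← Multiset.cons_erase (Multiset.mem_range.mpr hk), Multiset.map_cons, Multiset.map_cons,
    Multiset.erase_cons_head]
  congr 1
  refine Multiset.map_congr rfl fun i hi => ?_
  rw [(Multiset.nodup_range d).mem_erase_iff, Multiset.mem_range] at hi
  exact heq i hi.2 hi.1

theorem piecewise_succ_of_eq {k : ℕ} (hk : f k = g k) :
    (fun i => if i < k + 1 then f i else g i) = fun i => if i < k then f i else g i := by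
  funext i
  split_ifs <;> first | rfl | omega | (obtain rfl : i = k := by omega); exact hk

-- If `f k = g k`, cutting at `k` is cutting at `k + 1`; otherwise `f (k - 1) + t ≤ f k < g k`,
-- so the step across the cut exceeds `t` and cannot extend a run.
theorem IsGenSeq.piecewise_of_le (hf : IsGenSeq c n d t f) (hg : IsGenSeq c n d t g)
    (hfg : ∀ i < d, f i ≤ g i) {k : ℕ} (hk : k ≤ d) :
    IsGenSeq c n d t fun i => if i < k then f i else g i := by
  refine Nat.decreasingInduction
    (motive := fun k _ => IsGenSeq c n d t fun i => if i < k then f i else g i) ?_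
    (hf.congr fun i hi => by simp [hi]) hk
  intro k hk ih
  rcases (hfg k hk).lt_or_eq with hlt | heq
  · refine hf.piecewise hg fun hk₀ _ => ?_
    have := hf.spread (k - 1) (by omega)
    rw [Nat.sub_add_cancel hk₀] at this
    omega
  · exact piecewise_succ_of_eq heq ▸ ih

theorem IsGenSeq.reflTransGen_covers (hf : IsGenSeq c n d t f) (hg : IsGenSeq c n d t g)
    (hfg : ∀ i < d, f i ≤ g i) :
    Relation.ReflTransGen (Covers c n d t) ↑((List.range d).map f) ↑((List.range d).map g) := by
  have hstep : ∀ k ≤ d, Relation.ReflTransGen (Covers c n d t)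
      ↑((List.range d).map fun i => if i < k then f i else g i) ↑((List.range d).map g) := by
    intro k hk
    induction k with
    | zero => exact .refl
    | succ k ih =>
      rcases (hfg k hk).lt_or_eq with hlt | heq
      · refine .head (covers_map_range (hf.piecewise_of_le hg hfg (by omega))
          (hf.piecewise_of_le hg hfg hk) hk (by simp [hlt]) fun i _ hik => ?_) (ih (by omega))
        split_ifs <;> first | rfl | omega
      · rw [piecewise_succ_of_eq heq]
        exact ih (by omega)
  have hfd : ((List.range d).map fun i => if i < d then f i else g i) = (List.range d).map f :=
    List.map_congr_left fun i hi => by simp [List.mem_range.mp hi]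
  exact hfd ▸ hstep d le_rfl

end GenSeq

theorem stmt_9_general (c n d t k r : ℕ)
    (hdk : d = k * c + r) (hr1 : 0 < r) (hr2 : r ≤ c)
    (hn : k + t * (d - 1) + 1 ≤ n)
    (M m0 : Multiset ℕ)
    (hM : M = ↑((List.range d).map fun i => n - (d - 1 - i) * t - (d - 1 - i) / c))
    (hm0 : m0 = ↑((List.range d).map fun i => i * t + i / c + 1)) :
    M ∈ GenM c n d t ∧
    (∀ u ∈ GenM c n d t, Relation.ReflTransGen (Covers c n d t) u M) ∧
    m0 ∈ GenM c n d t ∧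
    (∀ u ∈ GenM c n d t, Relation.ReflTransGen (Covers c n d t) m0 u) := by
  have hc : 0 < c := by omega
  have hk : (d - 1) / c = k := by
    rw [show d - 1 = r - 1 + k * c by omega, Nat.add_mul_div_right _ _ hc,
      Nat.div_eq_of_lt (by omega), zero_add]
  have hmin : IsGenSeq c n d t (minSeq c t) :=
    isGenSeq_minSeq hc (by rw [minSeq, hk, mul_comm]; omega)
  have hM' : M = ↑((List.range d).map fun i => n + 1 - minSeq c t (d - 1 - i)) := by
    rw [hM]
    congr! 3 with i
    simp only [minSeq]
    omega
  refine ⟨mem_genM_iff.mpr ⟨_, hmin.reflect, hM'⟩, ?_,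
    mem_genM_iff.mpr ⟨_, hmin, hm0⟩, ?_⟩
  · rintro u hu
    obtain ⟨f, hf, rfl⟩ := mem_genM_iff.mp hu
    exact hM' ▸ hf.reflTransGen_covers hmin.reflect fun i hi => hf.le_sub_minSeq hc hi
  · rintro u hu
    obtain ⟨f, hf, rfl⟩ := mem_genM_iff.mp hu
    exact hm0 ▸ hmin.reflTransGen_covers hf fun i hi => hf.minSeq_le hc hi

/-- Write `d = kc + r`, `0 < r ≤ c` (so `k = ⌊(d-1)/c⌋`).
The generators of `I_{c,(n,d,t)}`, partially ordered by the transitive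
closure of the covering relation, have a unique maximal element
`x_{a₁}⋯x_{a_d}` with `a_{d-i+1} = n - (i-1)t - ⌊(i-1)/c⌋` and a unique
minimal element `x_{α₁}⋯x_{α_d}` with `α_i = (i-1)t + ⌊(i-1)/c⌋ + 1`;
indeed the former is the greatest and the latter the least element. -/
theorem stmt_9 (c n d t k r : ℕ) (hc : 1 ≤ c) (hd : 1 ≤ d)
    (hdk : d = k * c + r) (hr1 : 0 < r) (hr2 : r ≤ c)
    (hn : k + t * (d - 1) + 1 ≤ n)
    (M m0 : Multiset ℕ)
    (hM : M = ↑((List.range d).map fun i => n - (d - 1 - i) * t - (d - 1 - i) / c))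
    (hm0 : m0 = ↑((List.range d).map fun i => i * t + i / c + 1)) :
    M ∈ GenM c n d t ∧
    (∀ u ∈ GenM c n d t, Relation.ReflTransGen (Covers c n d t) u M) ∧
    m0 ∈ GenM c n d t ∧
    (∀ u ∈ GenM c n d t, Relation.ReflTransGen (Covers c n d t) m0 u) :=
  stmt_9_general c n d t k r hdk hr1 hr2 hn M m0 hM hm0
end

section
/- With k = ⌊(d−1)/c⌋, r = d − kc, α_i = (i−1)t + ⌊(i−1)/c⌋ + 1 and a_i = n − k − t(d−1) + (i−1)t + ⌈(i−r)/c⌉: if n − k − t(d−1) < t + 1 + δ_min (where δ_min = min_{1≤i≤d−1}(⌊i/c⌋ − ⌈(i−r)/c⌉)), then the intervals [α_1,a_1], ..., [α_d,a_d] are pairwise disjoint (a_i < α_{i+1} for all i), and the total number of integers they contain is Σ_{i=1}^d (a_i − α_i + 1) = nd − d(d−1)t − k(k−1)c − 2rk. -/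
lemma flq (c : ℤ) (hc : 0 < c) (x : ℤ) : ⌊(x : ℚ) / (c : ℚ)⌋ = x / c := by
  lift c to ℕ using hc.le with c'
  have := Rat.floor_intCast_div_natCast x c'
  push_cast at this ⊢
  exact this

lemma ceq (c : ℤ) (hc : 0 < c) (x : ℤ) : ⌈(x : ℚ) / (c : ℚ)⌉ = -((-x) / c) := by
  rw [show (x : ℚ) / (c : ℚ) = -((((-x : ℤ)) : ℚ) / (c : ℚ)) by push_cast; ring,
    Int.ceil_neg, flq c hc]

lemma sum_div_lemma (c : ℤ) (hc : 0 < c) (m : ℕ) :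
    2 * ∑ j ∈ Finset.range m, ((j : ℤ) / c) =
      c * ((m : ℤ)/c) * ((m : ℤ)/c - 1) + 2 * ((m : ℤ)/c) * ((m : ℤ) - ((m : ℤ)/c) * c) := by
  induction m with
  | zero => simp
  | succ m ih =>
    rw [Finset.sum_range_succ]
    have h1 := Int.mul_ediv_add_emod (m : ℤ) c
    have h2 := Int.emod_nonneg (m : ℤ) (by omega : c ≠ 0)
    have h3 := Int.emod_lt_of_pos (m : ℤ) hc
    have key : ((m : ℤ) + 1) / c = ((m : ℤ) % c + 1) / c + (m : ℤ) / c := by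
      conv_lhs => rw [show (m : ℤ) + 1 = ((m : ℤ) % c + 1) + ((m : ℤ)/c) * c by linarith]
      rw [Int.add_mul_ediv_right _ _ (by omega : c ≠ 0)]
    push_cast
    by_cases hcase : (m : ℤ) % c = c - 1
    · have hq : ((m : ℤ) + 1) / c = (m : ℤ)/c + 1 := by
        rw [key, hcase, sub_add_cancel, Int.ediv_self (by omega : c ≠ 0)]; ring
      rw [hq]
      have hm : (m : ℤ) = c * ((m : ℤ)/c) + c - 1 := by linarith
      nlinarith [ih, hm]
    · have hq : ((m : ℤ) + 1) / c = (m : ℤ)/c := by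
        rw [key, Int.ediv_eq_zero_of_lt (by omega) (by omega), zero_add]
      rw [hq]
      linear_combination ih

lemma sum_Icc_int (f : ℤ → ℤ) (m : ℕ) :
    ∑ i ∈ Finset.Icc (1 : ℤ) (m : ℤ), f i = ∑ j ∈ Finset.range m, f ((j : ℤ) + 1) := by
  refine Finset.sum_nbij' (fun i => (i - 1).toNat) (fun j => (j : ℤ) + 1) ?_ ?_ ?_ ?_ ?_
  · intro i hi; simp only [Finset.mem_Icc] at hi; simp only [Finset.mem_range]; omega
  · intro j hj; simp only [Finset.mem_range] at hj; simp only [Finset.mem_Icc]; omega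
  · intro i hi; simp only [Finset.mem_Icc] at hi; omega
  · intro j hj; simp only [Finset.mem_range] at hj; omega
  · intro i hi; simp only [Finset.mem_Icc] at hi
    congr 1; omega

lemma sum_Icc_reflect (f : ℤ → ℤ) (d : ℤ) :
    ∑ i ∈ Finset.Icc (1 : ℤ) d, f i = ∑ i ∈ Finset.Icc (1 : ℤ) d, f (d + 1 - i) := by
  refine Finset.sum_nbij' (fun i => d + 1 - i) (fun i => d + 1 - i) ?_ ?_ ?_ ?_ ?_ <;>
    intro i hi <;> simp only [Finset.mem_Icc] at * <;>
    first | omega | (congr 1; omega)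

/-- With `k = ⌊(d-1)/c⌋`, `r = d - kc`,
`α_i = (i-1)t + ⌊(i-1)/c⌋ + 1`,
`a_i = n - k - t(d-1) + (i-1)t + ⌈(i-r)/c⌉` and
`δ_min = min_{1 ≤ i ≤ d-1} (⌊i/c⌋ - ⌈(i-r)/c⌉)`:
if `n - k - t(d-1) < t + 1 + δ_min`, then the integer intervals
`[α₁,a₁], …, [α_d,a_d]` are pairwise disjoint (`a_i < α_{i+1}` for all `i`)
and the total number of integers they contain is
`Σ_{i=1}^d (a_i - α_i + 1) = nd - d(d-1)t - k(k-1)c - 2rk`. -/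
theorem stmt_12 (n d c t k r : ℤ) (hc : 1 ≤ c) (hd : 2 ≤ d) (ht : 0 ≤ t)
    (hk : k = ⌊((d : ℚ) - 1) / (c : ℚ)⌋) (hr : r = d - k * c)
    (α a δ : ℤ → ℤ)
    (hα : ∀ i, α i = (i - 1) * t + ⌊((i : ℚ) - 1) / (c : ℚ)⌋ + 1)
    (ha : ∀ i, a i = n - k - t * (d - 1) + (i - 1) * t +
        ⌈((i : ℚ) - (r : ℚ)) / (c : ℚ)⌉)
    (hδ : ∀ i, δ i = ⌊(i : ℚ) / (c : ℚ)⌋ - ⌈((i : ℚ) - (r : ℚ)) / (c : ℚ)⌉)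
    (δmin : ℤ)
    (hδmin : IsLeast {x : ℤ | ∃ i, 1 ≤ i ∧ i ≤ d - 1 ∧ x = δ i} δmin)
    (hnontriv : ∀ i, 1 ≤ i → i ≤ d → α i ≤ a i)
    (hyp : n - k - t * (d - 1) < t + 1 + δmin) :
    (∀ i, 1 ≤ i → i ≤ d - 1 → a i < α (i + 1)) ∧
    (∑ i ∈ Finset.Icc (1 : ℤ) d, (a i - α i + 1)) =
      n * d - d * (d - 1) * t - k * (k - 1) * c - 2 * r * k := by
  have hc0 : (0 : ℤ) < c := hc
  have hcne : c ≠ 0 := by omega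
  have hk' : k = (d - 1) / c := by
    rw [hk, show ((d : ℚ) - 1) = (((d - 1 : ℤ)) : ℚ) by push_cast; ring, flq c hc0]
  have hck : c * k + (d - 1) % c = d - 1 := by rw [hk']; exact Int.mul_ediv_add_emod _ _
  have h2 := Int.emod_nonneg (d - 1) hcne
  have h3 := Int.emod_lt_of_pos (d - 1) hc0
  have hmod : (d - 1) % c = r - 1 := by
    have hcomm : c * k = k * c := mul_comm c k
    linarith
  have hr1 : 1 ≤ r := by omega
  have hrc : r ≤ c := by omega
  constructor
  · intro i h1i hid
    have hδi : δmin ≤ δ i := hδmin.2 ⟨i, h1i, hid, rfl⟩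
    rw [hδ i] at hδi
    rw [ha i, hα (i + 1)]
    have e1 : ((((i + 1) : ℤ)) : ℚ) - 1 = (i : ℚ) := by push_cast; ring
    rw [e1]
    have : n - k - t * (d - 1) < t + 1 + (⌊(i : ℚ) / (c : ℚ)⌋ - ⌈((i : ℚ) - (r : ℚ)) / (c : ℚ)⌉) :=
      lt_of_lt_of_le hyp (by linarith)
    push_cast
    linarith
  · have hdn : ((d.toNat : ℤ)) = d := by omega
    have hconst : ∀ x : ℤ, ∑ _i ∈ Finset.Icc (1 : ℤ) d, x = d * x := by
      intro x
      rw [Finset.sum_const, nsmul_eq_mul, Int.card_Icc,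
        show (d + 1 - 1).toNat = d.toNat from by omega, hdn]
    have hpt : ∀ i ∈ Finset.Icc (1 : ℤ) d, a i - α i + 1 =
        ((n - k - t * (d - 1)) + (-((r - i) / c))) - ((i - 1) / c) := by
      intro i _
      rw [ha i, hα i]
      rw [show ((i : ℚ) - (r : ℚ)) / (c : ℚ) = (((i - r : ℤ)) : ℚ) / (c : ℚ) by push_cast; ring,
        ceq c hc0, show ((i : ℚ) - 1) / (c : ℚ) = (((i - 1 : ℤ)) : ℚ) / (c : ℚ) by push_cast; ring,
        flq c hc0]
      rw [show -(i - r) = r - i by ring]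
      ring
    have hrefl : ∑ i ∈ Finset.Icc (1 : ℤ) d, (-((r - i) / c)) =
        ∑ i ∈ Finset.Icc (1 : ℤ) d, (k - (i - 1) / c) := by
      rw [sum_Icc_reflect (fun i => -((r - i) / c)) d]
      refine Finset.sum_congr rfl ?_
      intro i hi
      rw [show r - (d + 1 - i) = (i - 1) + (-k) * c by linarith,
        Int.add_mul_ediv_right _ _ hcne]
      ring
    set F := ∑ i ∈ Finset.Icc (1 : ℤ) d, ((i - 1) / c) with hF
    have e1 : ∑ i ∈ Finset.Icc (1 : ℤ) d, (a i - α i + 1) =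
        (∑ i ∈ Finset.Icc (1 : ℤ) d, ((n - k - t * (d - 1)) + (-((r - i) / c)))) - F := by
      rw [hF, ← Finset.sum_sub_distrib]
      exact Finset.sum_congr rfl hpt
    have e2 : ∑ i ∈ Finset.Icc (1 : ℤ) d, ((n - k - t * (d - 1)) + (-((r - i) / c))) =
        d * (n - k - t * (d - 1)) + (d * k - F) := by
      rw [Finset.sum_add_distrib, hconst, hrefl, Finset.sum_sub_distrib, hconst, hF]
    rw [e1, e2]
    have hFr : F = ∑ j ∈ Finset.range d.toNat, ((j : ℤ) / c) := by
      rw [hF, ← hdn, sum_Icc_int (fun i => (i - 1) / c) d.toNat]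
      refine Finset.sum_congr rfl ?_
      intro j _
      rw [show (j : ℤ) + 1 - 1 = (j : ℤ) by ring]
    have hsd := sum_div_lemma c hc0 d.toNat
    rw [← hFr, hdn] at hsd
    by_cases hcase : r = c
    · have hqv : d / c = k + 1 := by
        rw [show d = (k + 1) * c from by linarith]
        exact Int.mul_ediv_cancel _ hcne
      rw [hqv] at hsd
      linear_combination -hsd + 2 * (k + 1) * hr - 2 * hcase
    · have hqv : d / c = k := by
        rw [show d = r + k * c from by linarith, Int.add_mul_ediv_right _ _ hcne,
          Int.ediv_eq_zero_of_lt (by omega) (by omega), zero_add]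
      rw [hqv] at hsd
      linear_combination -hsd + 2 * k * hr
end

section
/- For n ≥ 2 and d ≥ 1, the (n−1)-st power of I_{(n,d,0),2} (the ideal generated by all degree-d monomials supported on at most 2 variables) equals m^{(n−1)d}, the ((n−1)d)-th power of the maximal ideal m = (x_1,...,x_n). Equivalently, every monomial of degree (n−1)d in n variables is a product of n − 1 monomials of degree d each supported on at most 2 variables. -/
/-!
Every monomial of degree `(k + 1) d` in at most `k + 2` variables has a divisor of degree `d` in at
most two variables whose cofactor lives in at most `k + 1` variables. If some exponent is at least
`d`, take `x_j ^ d`. Otherwise all `k + 2` variables occur, some exponent `e_i ≤ d` by averaging,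
and averaging over the other `k + 1` exponents gives `j ≠ i` with `e_i + e_j ≥ d`; then
`x_i ^ e_i x_j ^ (d - e_i)` removes `x_i`. Induction on `k` shows that every monomial of degree
`k d` in at most `k + 1` variables lies in `I ^ k`, which gives `m ^ ((n - 1) d) ≤ I ^ (n - 1)`;
the other inclusion holds because `I ≤ m ^ d`.
-/

open Finset

namespace Finsupp

variable {σ : Type*}

theorem exists_le_apply_of_card_support_mul_le_degree {e : σ →₀ ℕ} {d : ℕ} (he : e ≠ 0)
    (h : #e.support * d ≤ e.degree) : ∃ j ∈ e.support, d ≤ e j := by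
  refine exists_le_of_sum_le (support_nonempty_iff.2 he) ?_
  simpa [degree_apply] using h

theorem exists_apply_le_of_degree_le_card_support_mul {e : σ →₀ ℕ} {d : ℕ} (he : e ≠ 0)
    (h : e.degree ≤ #e.support * d) : ∃ i ∈ e.support, e i ≤ d := by
  refine exists_le_of_sum_le (support_nonempty_iff.2 he) ?_
  simpa [degree_apply] using h

theorem exists_le_degree_eq_card_support_le_two {e : σ →₀ ℕ} {k d : ℕ}
    (he : e.degree = (k + 1) * d) (hsupp : #e.support ≤ k + 2) :
    ∃ f ≤ e, f.degree = d ∧ #f.support ≤ 2 ∧ #(e - f).support ≤ k + 1 := by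
  classical
  rcases eq_or_ne e 0 with rfl | he0
  · exact ⟨0, le_rfl, by simpa [eq_comm] using he, by simp, by simp⟩
  rcases Nat.lt_or_eq_of_le hsupp with hlt | heq
  · obtain ⟨j, -, hj⟩ := exists_le_apply_of_card_support_mul_le_degree he0
      (he ▸ Nat.mul_le_mul_right d (Nat.le_of_lt_succ hlt))
    refine ⟨single j d, ?_, degree_single j d, ?_, ?_⟩
    · intro x
      rw [single_apply]
      split_ifs with h
      · exact h ▸ hj
      · exact Nat.zero_le _
    · exact (card_le_card support_single_subset).trans (by simp)
    · exact (card_le_card support_tsub).trans (Nat.le_of_lt_succ hlt)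
  · obtain ⟨i, hi, hid⟩ := exists_apply_le_of_degree_le_card_support_mul (d := d) he0
      (by rw [he, heq]; exact Nat.mul_le_mul_right d (Nat.le_succ _))
    have hcard : #(e.support.erase i) = k + 1 := by rw [card_erase_of_mem hi, heq]; rfl
    have hsum : ∑ x ∈ e.support.erase i, e x = (k + 1) * d - e i := by
      rw [← he, degree_apply, ← Finset.add_sum_erase _ _ hi, Nat.add_sub_cancel_left]
    obtain ⟨j, hj, hjd⟩ : ∃ j ∈ e.support.erase i, d - e i ≤ e j := by
      refine exists_le_of_sum_le (card_pos.1 (by omega)) ?_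
      rw [hsum, sum_const, hcard, smul_eq_mul, Nat.mul_sub]
      exact Nat.sub_le_sub_left (Nat.le_mul_of_pos_left (e i) k.succ_pos) _
    have hij : j ≠ i := ne_of_mem_erase hj
    refine ⟨single i (e i) + single j (d - e i), ?_, ?_, ?_, ?_⟩
    · intro x
      simp only [coe_add, Pi.add_apply, single_apply]
      split_ifs <;> subst_vars
      · exact absurd rfl hij
      all_goals omega
    · rw [map_add, degree_single, degree_single]
      omega
    · refine (card_le_card (support_add.trans (union_subset_union support_single_subset
        support_single_subset))).trans (card_union_le _ _)
    · refine (card_le_card fun x hx => ?_).trans hcard.le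
      rw [mem_erase]
      refine ⟨fun hxi => ?_, support_tsub hx⟩
      subst hxi
      simp [hij] at hx

end Finsupp

namespace MvPolynomial

open Finsupp

variable (σ R : Type*) [CommSemiring R]

/-- The paper's `I_{(n,d,0),2}` when `σ = Fin n`. -/
noncomputable def idealOfTwoVarMonomials (d : ℕ) : Ideal (MvPolynomial σ R) :=
  Ideal.span {p | ∃ e : σ →₀ ℕ, e.degree = d ∧ #e.support ≤ 2 ∧ p = monomial e 1}

variable {σ R}

theorem idealOfTwoVarMonomials_le_pow_idealOfVars [Nontrivial R] (d : ℕ) :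
    idealOfTwoVarMonomials σ R d ≤ idealOfVars σ R ^ d := by
  rw [idealOfTwoVarMonomials, Ideal.span_le]
  rintro _ ⟨e, rfl, -, rfl⟩
  exact (monomial_mem_pow_idealOfVars_iff _ e one_ne_zero).2 le_rfl

theorem monomial_mem_idealOfTwoVarMonomials_pow {d : ℕ} :
    ∀ (k : ℕ) (e : σ →₀ ℕ), e.degree = k * d → #e.support ≤ k + 1 →
      monomial e (1 : R) ∈ idealOfTwoVarMonomials σ R d ^ k
  | 0, _, _, _ => by simp
  | k + 1, e, he, hsupp => by
    obtain ⟨f, hfe, hf, hfsupp, hrest⟩ := exists_le_degree_eq_card_support_le_two he hsupp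
    have hdeg : (e - f).degree = k * d := by
      have := congrArg degree (tsub_add_cancel_of_le hfe)
      rw [map_add, hf, he, add_one_mul] at this
      omega
    rw [← add_tsub_cancel_of_le hfe, ← mul_one (1 : R), ← monomial_mul, pow_succ']
    exact Ideal.mul_mem_mul (Ideal.subset_span ⟨f, hf, hfsupp, rfl⟩)
      (monomial_mem_idealOfTwoVarMonomials_pow k _ hdeg hrest)

theorem pow_idealOfVars_le_idealOfTwoVarMonomials_pow [Fintype σ] {k : ℕ}
    (hσ : Fintype.card σ ≤ k + 1) (d : ℕ) :
    idealOfVars σ R ^ (k * d) ≤ idealOfTwoVarMonomials σ R d ^ k := by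
  rw [pow_idealOfVars_eq_span, Ideal.span_le]
  rintro _ ⟨e, he, rfl⟩
  exact monomial_mem_idealOfTwoVarMonomials_pow k e he ((card_le_univ _).trans hσ)

theorem idealOfTwoVarMonomials_pow_eq [Fintype σ] [Nontrivial R] {k : ℕ}
    (hσ : Fintype.card σ ≤ k + 1) (d : ℕ) :
    idealOfTwoVarMonomials σ R d ^ k = idealOfVars σ R ^ (k * d) :=
  le_antisymm
    ((Ideal.pow_right_mono (idealOfTwoVarMonomials_le_pow_idealOfVars d) k).trans_eq
      (by rw [← pow_mul, mul_comm]))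
    (pow_idealOfVars_le_idealOfTwoVarMonomials_pow hσ d)

end MvPolynomial

open MvPolynomial

theorem stmt_17_general (K : Type*) [Field K] (n d : ℕ) :
    (Ideal.span {p : MvPolynomial (Fin n) K | ∃ e : Fin n →₀ ℕ,
        (∑ i, e i) = d ∧ e.support.card ≤ 2 ∧ p = monomial e 1}) ^ (n - 1) =
      (Ideal.span (Set.range (X : Fin n → MvPolynomial (Fin n) K))) ^
        ((n - 1) * d) := by
  simp only [← Finsupp.degree_eq_sum]
  exact idealOfTwoVarMonomials_pow_eq (by rw [Fintype.card_fin]; omega) d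

/-- For `n ≥ 2`, `d ≥ 1`, the `(n-1)`-st power of
`I_{(n,d,0),2}` (generated by all degree-`d` monomials supported on at most
two variables) equals `m^{(n-1)d}`, where `m = (x₁,…,x_n)`. -/
theorem stmt_17 (K : Type*) [Field K] (n d : ℕ) (hn : 2 ≤ n) (hd : 1 ≤ d) :
    (Ideal.span {p : MvPolynomial (Fin n) K | ∃ e : Fin n →₀ ℕ,
        (∑ i, e i) = d ∧ e.support.card ≤ 2 ∧ p = monomial e 1}) ^ (n - 1) =
      (Ideal.span (Set.range (X : Fin n → MvPolynomial (Fin n) K))) ^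
        ((n - 1) * d) :=
  stmt_17_general K n d
end
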